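/- For every T > 0 there exists a constant C₃, independent of n, such that for every integer n ≥ 2, all x, y ∈ [0,1] and every t ∈ [0,T], ∫₀ᵗ ∫₀¹ (Gⁿ(t-r, x, z) - Gⁿ(t-r, y, z))² dz dr ≤ C₃·|x-y|. -/

import Mathlib

/-! Discrete sine orthogonality (`∑_{k<n} φ_j(k/n) φ_l(k/n) = n δ_{jl}` for `1 ≤ j, l ≤ n - 1`)
turns the `z`-integral into `∑_j e^{2λ_j^n (t-r)} d_j²` with `d_j = φ_j^n(x) - φ_j^n(y)`.
Integrating in `r` costs at most `d_j² / (-2λ_j^n) ≤ d_j² / (8j²)` by Jordan's inequality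
`sin θ ≥ 2θ/π`. As `φ_j^n` is bounded by `√2` and `√2 jπ`-Lipschitz,
`d_j² ≤ 8 min(1, (js)²)` with `s = π|x - y|/2`, and
`∑_j min(1, (js)²)/j² ≤ 2s ∑_j s/(1 + (js)²) ≤ 2s ∫₀^∞ s/(1 + (us)²) du = πs`. -/

/-- `φ_j(x) = √2 sin(jπx)`. -/
noncomputable def phi (j : ℕ) (x : ℝ) : ℝ := Real.sqrt 2 * Real.sin ((j : ℝ) * Real.pi * x)

/-- The eigenvalue `λ_j^n = -4n² sin²(jπ/(2n))` of `n²Aⁿ`. -/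
noncomputable def lamN (n j : ℕ) : ℝ :=
  -4 * (n : ℝ)^2 * (Real.sin ((j : ℝ) * Real.pi / (2 * n)))^2

/-- `k_n(y) = ⌊ny⌋/n`. -/
noncomputable def kn (n : ℕ) (y : ℝ) : ℝ := (⌊(n : ℝ) * y⌋ : ℝ) / n

/-- `φ_j^n`, the piecewise linear interpolation of `φ_j` on the grid `{k/n}`:
for `x ∈ [k/n, (k+1)/n]`, `φ_j^n(x) = φ_j(k/n) + (nx - k)(φ_j((k+1)/n) - φ_j(k/n))`. -/
noncomputable def phiLin (n j : ℕ) (x : ℝ) : ℝ :=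
  phi j ((⌊(n : ℝ) * x⌋ : ℝ) / n)
    + ((n : ℝ) * x - (⌊(n : ℝ) * x⌋ : ℝ))
      * (phi j (((⌊(n : ℝ) * x⌋ : ℝ) + 1) / n) - phi j ((⌊(n : ℝ) * x⌋ : ℝ) / n))

/-- The discretized kernel `Gⁿ(t,x,y) = Σ_{j=1}^{n-1} e^{λ_j^n t} φ_j^n(x) φ_j(k_n(y))`. -/
noncomputable def GN (n : ℕ) (t x y : ℝ) : ℝ :=
  ∑ j ∈ Finset.Icc 1 (n - 1), Real.exp (lamN n j * t) * phiLin n j x * phi j (kn n y)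

open Real Finset

theorem integral_comp_floor (h : ℤ → ℝ) (n : ℕ) :
    ∫ u in (0:ℝ)..n, h ⌊u⌋ = ∑ k ∈ range n, h k := by
  have hstep : ∀ k : ℕ, Set.EqOn (fun u : ℝ => h ⌊u⌋) (fun _ => h k) (Set.uIoo k (k + 1)) := by
    intro k u hu
    rw [Set.uIoo_of_le (by linarith)] at hu
    simp only [Int.floor_eq_iff.2 ⟨by exact_mod_cast hu.1.le, by exact_mod_cast hu.2⟩]
  have hint : ∀ k < n, IntervalIntegrable (fun u : ℝ => h ⌊u⌋) MeasureTheory.volume k (k + 1) :=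
    fun k _ => intervalIntegrable_const.congr_uIoo (hstep k).symm
  have hsum := intervalIntegral.sum_integral_adjacent_intervals (a := fun k : ℕ => (k : ℝ))
    (by simpa using hint)
  simp only [Nat.cast_zero, Nat.cast_add, Nat.cast_one] at hsum
  rw [← hsum]
  refine sum_congr rfl fun k _ => ?_
  rw [intervalIntegral.integral_congr_uIoo (hstep k)]
  simp

theorem integral_comp_kn (g : ℝ → ℝ) {n : ℕ} (hn : n ≠ 0) :
    ∫ z in (0:ℝ)..1, g (kn n z) = (∑ k ∈ range n, g (k / n)) / n := by
  have hn' : (n : ℝ) ≠ 0 := by exact_mod_cast hn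
  have := intervalIntegral.integral_comp_mul_left (fun u => g (⌊u⌋ / n)) hn' (a := 0) (b := 1)
  simp only [mul_zero, mul_one] at this
  simp only [kn, this, integral_comp_floor (fun k => g (k / n)), smul_eq_mul, Int.cast_natCast]
  field_simp

theorem sum_range_cos_int_mul_pi_div {n : ℕ} {m : ℤ} (hm0 : m ≠ 0) (hm : |m| < 2 * n) :
    ∑ k ∈ range n, cos (m * π / n * k) = sin (m * π / 2) ^ 2 := by
  have hn : (0 : ℝ) < n := by
    have : (0 : ℤ) < n := by have := abs_nonneg m; omega
    exact_mod_cast this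
  have hm' : |(m : ℝ)| < 2 * n := by exact_mod_cast hm
  set a := m * π / n
  have ha : sin (a / 2) ≠ 0 := by
    have hbound : |a / 2| < π := by
      rw [abs_div, abs_div, abs_mul, abs_of_pos pi_pos, abs_of_pos hn, abs_two,
        div_div, div_lt_iff₀ (by positivity)]
      nlinarith [pi_pos]
    rw [Ne, sin_eq_zero_iff_of_lt_of_lt (abs_lt.1 hbound).1 (abs_lt.1 hbound).2]
    simp [a, hm0, pi_ne_zero, hn.ne']
  have hsin : sin (m * π / 2) * cos (m * π / 2) = 0 := by
    have := sin_int_mul_pi m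
    rw [show (m : ℝ) * π = 2 * (m * π / 2) by ring, sin_two_mul] at this
    linarith
  apply mul_left_cancel₀ ha
  have hsum := sin_mul_sum_cos n a 0
  simp only [add_zero] at hsum
  have hna : n * a = m * π := by simp only [a]; field_simp
  rw [hsum, show n * a / 2 = m * π / 2 by rw [hna],
    show (n - 1) * a / 2 = m * π / 2 - a / 2 by linear_combination hna / 2, cos_sub]
  linear_combination cos (a / 2) * hsin

theorem sum_phi_mul_phi {n j l : ℕ} (hj : j ∈ Icc 1 (n - 1)) (hl : l ∈ Icc 1 (n - 1)) :
    ∑ k ∈ range n, phi j (k / n) * phi l (k / n) = if j = l then (n : ℝ) else 0 := by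
  rw [mem_Icc] at hj hl
  have hprod : ∀ k : ℕ, phi j (k / n) * phi l (k / n)
      = cos (((j - l : ℤ) : ℝ) * π / n * k) - cos (((j + l : ℤ) : ℝ) * π / n * k) := by
    intro k
    rw [phi, phi, mul_mul_mul_comm, mul_self_sqrt zero_le_two, ← mul_assoc, two_mul_sin_mul_sin]
    push_cast
    ring_nf
  have hplus := sum_range_cos_int_mul_pi_div (n := n) (m := j + l) (by omega)
    (by rw [abs_of_nonneg (by omega)]; omega)
  rw [sum_congr rfl fun k _ => hprod k, sum_sub_distrib, hplus]
  split_ifs with h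
  · subst h
    rw [show ((j + j : ℤ) : ℝ) * π / 2 = j * π by push_cast; ring, sin_nat_mul_pi]
    simp
  · have hminus := sum_range_cos_int_mul_pi_div (n := n) (m := j - l) (by omega)
      (by rw [abs_lt]; omega)
    rw [hminus, show ((j + l : ℤ) : ℝ) * π / 2 = ((j - l : ℤ) : ℝ) * π / 2 + l * π by
      push_cast; ring, sin_add_nat_mul_pi, mul_pow, ← pow_mul, pow_mul', neg_one_sq, one_pow,
      one_mul, sub_self]

theorem sum_sq_sum_mul_phi (n : ℕ) (c : ℕ → ℝ) :
    ∑ k ∈ range n, (∑ j ∈ Icc 1 (n - 1), c j * phi j (k / n)) ^ 2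
      = n * ∑ j ∈ Icc 1 (n - 1), c j ^ 2 := by
  calc ∑ k ∈ range n, (∑ j ∈ Icc 1 (n - 1), c j * phi j (k / n)) ^ 2
      = ∑ j ∈ Icc 1 (n - 1), ∑ l ∈ Icc 1 (n - 1),
          c j * c l * ∑ k ∈ range n, phi j (k / n) * phi l (k / n) := by
        simp_rw [sq, sum_mul_sum, mul_sum]
        rw [sum_comm]
        refine sum_congr rfl fun j _ => ?_
        rw [sum_comm]
        refine sum_congr rfl fun l _ => sum_congr rfl fun k _ => ?_
        ring
    _ = ∑ j ∈ Icc 1 (n - 1), ∑ l ∈ Icc 1 (n - 1), c j * c l * if j = l then (n : ℝ) else 0 := by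
        refine sum_congr rfl fun j hj => sum_congr rfl fun l hl => ?_
        rw [sum_phi_mul_phi hj hl]
    _ = n * ∑ j ∈ Icc 1 (n - 1), c j ^ 2 := by
        rw [mul_sum]
        refine sum_congr rfl fun j hj => ?_
        simp only [mul_ite, mul_zero, sum_ite_eq, if_pos hj]
        ring

theorem integral_sq_sum_mul_phi_kn {n : ℕ} (hn : n ≠ 0) (c : ℕ → ℝ) :
    ∫ z in (0:ℝ)..1, (∑ j ∈ Icc 1 (n - 1), c j * phi j (kn n z)) ^ 2
      = ∑ j ∈ Icc 1 (n - 1), c j ^ 2 := by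
  rw [integral_comp_kn (fun w => (∑ j ∈ Icc 1 (n - 1), c j * phi j w) ^ 2) hn,
    sum_sq_sum_mul_phi]
  field_simp

noncomputable def linInterp (f : ℝ → ℝ) (u : ℝ) : ℝ := f ⌊u⌋ + Int.fract u * (f (⌊u⌋ + 1) - f ⌊u⌋)

section linInterp

variable {f : ℝ → ℝ}

theorem abs_linInterp_le {M : ℝ} (hf : ∀ u, |f u| ≤ M) (u : ℝ) : |linInterp f u| ≤ M := by
  have h0 := Int.fract_nonneg u
  have h1 := Int.fract_lt_one u
  calc |linInterp f u| = |(1 - Int.fract u) * f ⌊u⌋ + Int.fract u * f (⌊u⌋ + 1)| := by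
        rw [linInterp]; ring_nf
    _ ≤ (1 - Int.fract u) * |f ⌊u⌋| + Int.fract u * |f (⌊u⌋ + 1)| := by
        refine (abs_add_le _ _).trans_eq ?_
        rw [abs_mul, abs_mul, abs_of_nonneg (by linarith), abs_of_nonneg h0]
    _ ≤ (1 - Int.fract u) * M + Int.fract u * M := by
        have := hf ⌊u⌋
        have := hf (⌊u⌋ + 1)
        gcongr
    _ = M := by ring

theorem abs_linInterp_sub_linInterp_le {L : ℝ} (hf : ∀ a b, |f a - f b| ≤ L * |a - b|)
    (u v : ℝ) : |linInterp f u - linInterp f v| ≤ L * |u - v| := by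
  wlog huv : u ≤ v generalizing u v
  · rw [abs_sub_comm, abs_sub_comm u]
    exact this v u (le_of_not_ge huv)
  rw [abs_sub_comm, abs_sub_comm u, abs_of_nonneg (sub_nonneg.2 huv)]
  have hstep : ∀ k : ℤ, |f (k + 1) - f k| ≤ L := fun k => by simpa using hf (k + 1) k
  rcases (Int.floor_mono huv).eq_or_lt with heq | hlt
  · have hdiff : linInterp f v - linInterp f u = (v - u) * (f (⌊u⌋ + 1) - f ⌊u⌋) := by
      simp only [linInterp, Int.fract, heq]
      ring
    rw [hdiff, abs_mul, abs_of_nonneg (sub_nonneg.2 huv), mul_comm]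
    exact mul_le_mul_of_nonneg_right (hstep _) (sub_nonneg.2 huv)
  · have hab : (⌊u⌋ : ℝ) + 1 ≤ ⌊v⌋ := by exact_mod_cast hlt
    have hu : |f (⌊u⌋ + 1) - linInterp f u| ≤ L * (⌊u⌋ + 1 - u) := by
      have h := Int.fract_lt_one u
      rw [show f (⌊u⌋ + 1) - linInterp f u = (1 - Int.fract u) * (f (⌊u⌋ + 1) - f ⌊u⌋) by
        rw [linInterp]; ring, abs_mul, abs_of_nonneg (by linarith), mul_comm]
      refine (mul_le_mul_of_nonneg_right (hstep _) (by linarith)).trans_eq ?_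
      rw [Int.fract]
      ring
    have hv : |linInterp f v - f ⌊v⌋| ≤ L * (v - ⌊v⌋) := by
      rw [linInterp, add_sub_cancel_left, abs_mul, abs_of_nonneg (Int.fract_nonneg v), mul_comm]
      exact mul_le_mul_of_nonneg_right (hstep _) (Int.fract_nonneg v)
    have hmid : |f ⌊v⌋ - f (⌊u⌋ + 1)| ≤ L * (⌊v⌋ - (⌊u⌋ + 1)) := by
      simpa [abs_of_nonneg (sub_nonneg.2 hab)] using hf ⌊v⌋ (⌊u⌋ + 1)
    calc |linInterp f v - linInterp f u|
        ≤ |linInterp f v - f ⌊v⌋| + |f ⌊v⌋ - f (⌊u⌋ + 1)| + |f (⌊u⌋ + 1) - linInterp f u| := by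
          linarith [abs_sub_le (linInterp f v) (f ⌊v⌋) (f (⌊u⌋ + 1)),
            abs_sub_le (linInterp f v) (f (⌊u⌋ + 1)) (linInterp f u)]
      _ ≤ L * (v - ⌊v⌋) + L * (⌊v⌋ - (⌊u⌋ + 1)) + L * (⌊u⌋ + 1 - u) := by gcongr
      _ = L * (v - u) := by ring

end linInterp

theorem phiLin_eq_linInterp (n j : ℕ) (x : ℝ) :
    phiLin n j x = linInterp (fun u => phi j (u / n)) (n * x) := by
  simp only [phiLin, linInterp, Int.fract]

theorem abs_phi_le (j : ℕ) (x : ℝ) : |phi j x| ≤ √2 := by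
  rw [phi, abs_mul, abs_of_nonneg (sqrt_nonneg 2)]
  exact mul_le_of_le_one_right (sqrt_nonneg 2) (abs_sin_le_one _)

theorem abs_phi_sub_phi_le (j : ℕ) (a b : ℝ) : |phi j a - phi j b| ≤ √2 * j * π * |a - b| := by
  rw [phi, phi, ← mul_sub, abs_mul, abs_of_nonneg (sqrt_nonneg 2)]
  calc √2 * |sin (j * π * a) - sin (j * π * b)| ≤ √2 * |j * π * a - j * π * b| :=
        mul_le_mul_of_nonneg_left (abs_sin_sub_sin_le _ _) (sqrt_nonneg 2)
    _ = √2 * j * π * |a - b| := by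
        rw [← mul_sub, abs_mul, abs_of_nonneg (by positivity)]; ring

theorem abs_phiLin_le (n j : ℕ) (x : ℝ) : |phiLin n j x| ≤ √2 := by
  rw [phiLin_eq_linInterp]
  exact abs_linInterp_le (fun u => abs_phi_le j _) _

theorem abs_phiLin_sub_phiLin_le {n : ℕ} (hn : n ≠ 0) (j : ℕ) (x y : ℝ) :
    |phiLin n j x - phiLin n j y| ≤ √2 * j * π * |x - y| := by
  have hn' : (0 : ℝ) < n := by positivity
  have hf : ∀ a b, |phi j (a / n) - phi j (b / n)| ≤ √2 * j * π / n * |a - b| := fun a b => by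
    refine (abs_phi_sub_phi_le j _ _).trans_eq ?_
    rw [← sub_div, abs_div, abs_of_pos hn']
    ring
  rw [phiLin_eq_linInterp, phiLin_eq_linInterp]
  refine (abs_linInterp_sub_linInterp_le hf _ _).trans_eq ?_
  rw [← mul_sub, abs_mul, abs_of_pos hn']
  field_simp

theorem sq_phiLin_sub_phiLin_le {n : ℕ} (hn : n ≠ 0) (j : ℕ) (x y : ℝ) :
    (phiLin n j x - phiLin n j y) ^ 2 ≤ 8 * min 1 ((j * (π / 2 * |x - y|)) ^ 2) := by
  have hbound : |phiLin n j x - phiLin n j y| ≤ 2 * √2 :=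
    (abs_sub _ _).trans (by linarith [abs_phiLin_le n j x, abs_phiLin_le n j y])
  have hlip := abs_phiLin_sub_phiLin_le hn j x y
  rw [mul_min_of_nonneg _ _ (by norm_num : (0 : ℝ) ≤ 8), ← sq_abs]
  refine le_min ?_ ?_
  · calc |phiLin n j x - phiLin n j y| ^ 2 ≤ (2 * √2) ^ 2 := by gcongr
      _ = 8 * 1 := by rw [mul_pow, sq_sqrt zero_le_two]; norm_num
  · calc |phiLin n j x - phiLin n j y| ^ 2 ≤ (√2 * j * π * |x - y|) ^ 2 := by gcongr
      _ = 8 * (j * (π / 2 * |x - y|)) ^ 2 := by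
        rw [mul_pow, mul_pow, mul_pow, sq_sqrt zero_le_two]; ring

theorem lamN_le {n j : ℕ} (hjn : j ≤ n) : lamN n j ≤ -4 * j ^ 2 := by
  rcases n.eq_zero_or_pos with rfl | hn
  · simp [lamN, Nat.le_zero.1 hjn]
  have hn' : (0 : ℝ) < n := by exact_mod_cast hn
  have hjn' : (j : ℝ) ≤ n := by exact_mod_cast hjn
  have hx0 : 0 ≤ j * π / (2 * n) := by positivity
  have hx1 : j * π / (2 * n) ≤ π / 2 := by
    rw [div_le_div_iff₀ (by positivity) two_pos]
    nlinarith [pi_pos]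
  have hsin : (j : ℝ) / n ≤ sin (j * π / (2 * n)) :=
    (mul_le_sin hx0 hx1).trans_eq' (by field_simp)
  have hsq : (j : ℝ) ^ 2 ≤ n ^ 2 * sin (j * π / (2 * n)) ^ 2 :=
    calc (j : ℝ) ^ 2 = n ^ 2 * (j / n) ^ 2 := by field_simp
      _ ≤ n ^ 2 * sin (j * π / (2 * n)) ^ 2 := by gcongr
  rw [lamN]
  linarith

theorem integral_exp_mul_sub_le {c : ℝ} (hc : c < 0) (t : ℝ) :
    ∫ r in (0:ℝ)..t, exp (c * (t - r)) ≤ (-c)⁻¹ := by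
  have hval : ∫ r in (0:ℝ)..t, exp (c * (t - r)) = (exp (c * t) - 1) / c := by
    have := intervalIntegral.integral_comp_sub_left (fun s => exp (c * s)) t (a := 0) (b := t)
    simp only [sub_self, sub_zero] at this
    rw [this, intervalIntegral.integral_comp_mul_left exp hc.ne, integral_exp, mul_zero,
      exp_zero, smul_eq_mul, inv_mul_eq_div]
  rw [hval, div_le_iff_of_neg hc, inv_mul_eq_div, div_neg, div_self hc.ne]
  linarith [exp_pos (c * t)]

theorem integral_sq_exp_lamN_mul_le {n j : ℕ} (hj : 1 ≤ j) (hjn : j ≤ n) (t d : ℝ) :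
    ∫ r in (0:ℝ)..t, (exp (lamN n j * (t - r)) * d) ^ 2 ≤ d ^ 2 / (8 * j ^ 2) := by
  have hj' : (1 : ℝ) ≤ j := by exact_mod_cast hj
  have hlam : 8 * j ^ 2 ≤ -(2 * lamN n j) := by linarith [lamN_le hjn]
  have hsq : ∀ r, (exp (lamN n j * (t - r)) * d) ^ 2 = d ^ 2 * exp (2 * lamN n j * (t - r)) := by
    intro r
    rw [mul_pow, sq (exp _), ← exp_add]
    ring_nf
  simp_rw [hsq, intervalIntegral.integral_const_mul]
  calc d ^ 2 * ∫ r in (0:ℝ)..t, exp (2 * lamN n j * (t - r))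
      ≤ d ^ 2 * (-(2 * lamN n j))⁻¹ :=
        mul_le_mul_of_nonneg_left (integral_exp_mul_sub_le (by nlinarith) t) (sq_nonneg d)
    _ ≤ d ^ 2 * (8 * (j : ℝ) ^ 2)⁻¹ := by gcongr
    _ = d ^ 2 / (8 * j ^ 2) := (div_eq_mul_inv _ _).symm

theorem sum_min_one_sq_div_sq_le (m : ℕ) {s : ℝ} (hs : 0 ≤ s) :
    ∑ j ∈ Icc 1 m, min 1 ((j * s) ^ 2) / j ^ 2 ≤ π * s := by
  set f : ℝ → ℝ := fun u => s / (1 + (u * s) ^ 2)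
  have hpt : ∀ j ∈ Icc 1 m, min 1 ((j * s) ^ 2) / j ^ 2 ≤ 2 * s * f j := by
    intro j hj
    have hj' : (0 : ℝ) < j := by exact_mod_cast (mem_Icc.1 hj).1
    have ha := sq_nonneg (j * s)
    have hf : 2 * s * f j = 2 * (j * s) ^ 2 / (1 + (j * s) ^ 2) / j ^ 2 := by
      simp only [f]
      field_simp
    rw [hf]
    gcongr
    rw [le_div_iff₀ (by positivity)]
    nlinarith [min_le_left 1 ((j * s) ^ 2), min_le_right 1 ((j * s) ^ 2)]
  have hanti : AntitoneOn f (Set.Icc 0 (0 + m)) := by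
    intro u hu v hv huv
    simp only [f]
    gcongr
    exact mul_nonneg hu.1 hs
  have hint : ∫ u in (0:ℝ)..m, f u = arctan (m * s) := by
    have hderiv : ∀ u ∈ Set.uIcc (0:ℝ) m, HasDerivAt (fun u => arctan (u * s)) (f u) u := by
      intro u _
      simpa [f, div_eq_mul_inv, mul_comm] using ((hasDerivAt_id u).mul_const s).arctan
    have hcont : Continuous f := by
      simp only [f]
      exact continuous_const.div (by fun_prop) fun u => by positivity
    rw [intervalIntegral.integral_eq_sub_of_hasDerivAt hderiv (hcont.intervalIntegrable _ _)]
    simp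
  calc ∑ j ∈ Icc 1 m, min 1 ((j * s) ^ 2) / j ^ 2
      ≤ ∑ j ∈ Icc 1 m, 2 * s * f j := sum_le_sum hpt
    _ = 2 * s * ∑ i ∈ range m, f (0 + ↑(i + 1)) := by
        rw [mul_sum, ← Ico_add_one_right_eq_Icc, sum_Ico_eq_sum_range]
        simp [add_comm]
    _ ≤ 2 * s * ∫ u in (0:ℝ)..0 + m, f u := by gcongr; exact hanti.sum_le_integral
    _ ≤ 2 * s * (π / 2) := by
        rw [zero_add, hint]
        gcongr
        exact (arctan_lt_pi_div_two _).le
    _ = π * s := by ring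

theorem integral_sq_GN_sub_GN {n : ℕ} (hn : n ≠ 0) (t x y : ℝ) :
    ∫ z in (0:ℝ)..1, (GN n t x z - GN n t y z) ^ 2
      = ∑ j ∈ Icc 1 (n - 1), (exp (lamN n j * t) * (phiLin n j x - phiLin n j y)) ^ 2 := by
  have hsub : ∀ z, GN n t x z - GN n t y z = ∑ j ∈ Icc 1 (n - 1),
      exp (lamN n j * t) * (phiLin n j x - phiLin n j y) * phi j (kn n z) := fun z => by
    rw [GN, GN, ← sum_sub_distrib]
    exact sum_congr rfl fun j _ => by ring
  simp_rw [hsub]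
  exact integral_sq_sum_mul_phi_kn hn _

theorem GN_space_difference_bound_general (T : ℝ) :
    ∃ C₃ : ℝ, ∀ n : ℕ, 2 ≤ n → ∀ x ∈ Set.Icc (0:ℝ) 1, ∀ y ∈ Set.Icc (0:ℝ) 1,
      ∀ t ∈ Set.Icc (0:ℝ) T,
      (∫ r in (0:ℝ)..t, ∫ z in (0:ℝ)..1, (GN n (t - r) x z - GN n (t - r) y z)^2)
        ≤ C₃ * |x - y| := by
  refine ⟨π ^ 2 / 2, fun n hn x _ y _ t _ => ?_⟩
  have hn0 : n ≠ 0 := by omega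
  set d : ℕ → ℝ := fun j => phiLin n j x - phiLin n j y
  calc ∫ r in (0:ℝ)..t, ∫ z in (0:ℝ)..1, (GN n (t - r) x z - GN n (t - r) y z) ^ 2
      = ∫ r in (0:ℝ)..t, ∑ j ∈ Icc 1 (n - 1), (exp (lamN n j * (t - r)) * d j) ^ 2 := by
        simp_rw [integral_sq_GN_sub_GN hn0]
        rfl
    _ = ∑ j ∈ Icc 1 (n - 1), ∫ r in (0:ℝ)..t, (exp (lamN n j * (t - r)) * d j) ^ 2 :=
        intervalIntegral.integral_finsetSum fun j _ => by
          apply Continuous.intervalIntegrable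
          fun_prop
    _ ≤ ∑ j ∈ Icc 1 (n - 1), min 1 ((j * (π / 2 * |x - y|)) ^ 2) / (j : ℝ) ^ 2 := by
        refine sum_le_sum fun j hj => ?_
        rw [mem_Icc] at hj
        calc ∫ r in (0:ℝ)..t, (exp (lamN n j * (t - r)) * d j) ^ 2 ≤ d j ^ 2 / (8 * (j : ℝ) ^ 2) :=
              integral_sq_exp_lamN_mul_le hj.1 (by omega) t (d j)
          _ ≤ 8 * min 1 ((j * (π / 2 * |x - y|)) ^ 2) / (8 * (j : ℝ) ^ 2) := by
              gcongr
              exact sq_phiLin_sub_phiLin_le hn0 j x y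
          _ = min 1 ((j * (π / 2 * |x - y|)) ^ 2) / j ^ 2 := mul_div_mul_left _ _ (by norm_num)
    _ ≤ π * (π / 2 * |x - y|) := sum_min_one_sq_div_sq_le _ (by positivity : 0 ≤ π / 2 * |x - y|)
    _ = π ^ 2 / 2 * |x - y| := by ring

/-- For every `T > 0` there is a constant `C₃` independent of `n` such that
`∫₀ᵗ∫₀¹ (Gⁿ(t-r,x,z) - Gⁿ(t-r,y,z))² dz dr ≤ C₃ |x-y|` for all `x, y ∈ [0,1]`,
`t ∈ [0,T]`. -/
theorem GN_space_difference_bound (T : ℝ) (hT : 0 < T) :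
    ∃ C₃ : ℝ, ∀ n : ℕ, 2 ≤ n → ∀ x ∈ Set.Icc (0:ℝ) 1, ∀ y ∈ Set.Icc (0:ℝ) 1,
      ∀ t ∈ Set.Icc (0:ℝ) T,
      (∫ r in (0:ℝ)..t, ∫ z in (0:ℝ)..1, (GN n (t - r) x z - GN n (t - r) y z)^2)
        ≤ C₃ * |x - y| :=
  GN_space_difference_bound_general T
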